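/- arXiv:1701.08139 — 3 statements merged into one kernel-verified Lean document; each statement's English description precedes it below -/
import Mathlib

section
/- A set Λ ⊆ [N]² is called corner-free if whenever (x,y), (x',y), (x,y') ∈ Λ and x - y = x' - y', then x = x' and y = y'. Then for every ε > 0, for all sufficiently large N, there exists a corner-free subset Λ of [N]² with |Λ| > N^(2 - (4 log 2 + ε)/log log N). -/
/-- A set `Λ ⊆ ℤ²` is corner-free if `(x,y), (x',y), (x,y') ∈ Λ` with
`x - y = x' - y'` implies `x = x'` and `y = y'`. -/
def CornerFree (Λ : Finset (ℤ × ℤ)) : Prop :=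
  ∀ x y x' y', (x, y) ∈ Λ → (x', y) ∈ Λ → (x, y') ∈ Λ → x - y = x' - y' → x = x' ∧ y = y'

theorem corner_free_large_subsets (ε : ℝ) (hε : 0 < ε) :
    ∃ N₀ : ℕ, ∀ N : ℕ, N₀ ≤ N →
      ∃ Λ : Finset (ℤ × ℤ),
        (∀ p ∈ Λ, p.1 ∈ Finset.Icc (1 : ℤ) N ∧ p.2 ∈ Finset.Icc (1 : ℤ) N) ∧
        CornerFree Λ ∧
        (Λ.card : ℝ) >
          (N : ℝ) ^ ((2 : ℝ) - (4 * Real.log 2 + ε) / Real.log (Real.log N)) := by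
  have hlog2 : (0:ℝ) < Real.log 2 := Real.log_pos (by norm_num)
  set c : ℝ := (4 * Real.log 2 + ε) / 5 with hc_def
  have hc : 0 < c := by positivity
  have hlo := (isLittleO_log_rpow_atTop (by norm_num : (0:ℝ) < 1/2)).def hc
  obtain ⟨L₀, hL₀⟩ := Filter.eventually_atTop.mp hlo
  refine ⟨⌈Real.exp (max L₀ 100)⌉₊, fun N hN => ?_⟩
  have hNR : Real.exp (max L₀ 100) ≤ (N:ℝ) :=
    le_trans (Nat.le_ceil _) (Nat.cast_le.2 hN)
  have hexp100 : Real.exp 100 ≤ Real.exp (max L₀ 100) :=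
    Real.exp_le_exp.2 (le_max_right _ _)
  have h101 : (101:ℝ) ≤ (N:ℝ) := by
    have := Real.add_one_le_exp (100:ℝ)
    linarith
  have hN12 : 12 ≤ N := by exact_mod_cast le_trans (by norm_num : (12:ℝ) ≤ 101) h101
  have hN0 : (0:ℝ) < (N:ℝ) := by linarith
  set L := Real.log N with hL_def
  have hL100 : 100 ≤ L := by
    have : max L₀ 100 ≤ L := by
      rw [hL_def, ← Real.log_exp (max L₀ 100)]
      exact Real.log_le_log (Real.exp_pos _) hNR
    exact le_trans (le_max_right _ _) this
  have hLL0 : L₀ ≤ L := by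
    have : max L₀ 100 ≤ L := by
      rw [hL_def, ← Real.log_exp (max L₀ 100)]
      exact Real.log_le_log (Real.exp_pos _) hNR
    exact le_trans (le_max_left _ _) this
  -- the construction
  set M := N / 3 with hM_def
  obtain ⟨A, hAsub, hAcard, hA3⟩ := rothNumberNat_spec M
  have hinj : Function.Injective
      (fun p : ℕ × ℕ => (((p.1 : ℤ) + 2 * M + 1 - 2 * p.2, (p.2 : ℤ)) : ℤ × ℤ)) := by
    intro p q h
    have h2 : (p.2 : ℤ) = q.2 := congrArg Prod.snd h
    have h1 : (p.1 : ℤ) + 2 * M + 1 - 2 * p.2 = (q.1 : ℤ) + 2 * M + 1 - 2 * q.2 :=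
      congrArg Prod.fst h
    have e2 : p.2 = q.2 := by exact_mod_cast h2
    have e1 : p.1 = q.1 := by omega
    exact Prod.ext e1 e2
  set Λ : Finset (ℤ × ℤ) := (A ×ˢ Finset.Icc 1 M).image
      (fun p : ℕ × ℕ => (((p.1 : ℤ) + 2 * M + 1 - 2 * p.2, (p.2 : ℤ)) : ℤ × ℤ)) with hΛ_def
  have hmem : ∀ p ∈ Λ, ∃ a, a ∈ A ∧ ∃ t, 1 ≤ t ∧ t ≤ M ∧
      p.1 = (a : ℤ) + 2 * M + 1 - 2 * t ∧ p.2 = (t : ℤ) := by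
    intro p hp
    rw [hΛ_def, Finset.mem_image] at hp
    obtain ⟨⟨a, t⟩, hat, rfl⟩ := hp
    rw [Finset.mem_product, Finset.mem_Icc] at hat
    exact ⟨a, hat.1, t, hat.2.1, hat.2.2, rfl, rfl⟩
  have h3M : 3 * M ≤ N := by omega
  refine ⟨Λ, ?_, ?_, ?_⟩
  · -- bounds
    intro p hp
    obtain ⟨a, ha, t, ht1, ht2, hpx, hpy⟩ := hmem p hp
    have haM : a < M := Finset.mem_range.mp (hAsub ha)
    rw [Finset.mem_Icc, Finset.mem_Icc, hpx, hpy]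
    push_cast
    omega
  · -- corner-free
    intro x y x' y' h1 h2 h3 hd
    obtain ⟨a1, ha1, t1, _, _, hx1, hy1⟩ := hmem _ h1
    obtain ⟨a2, ha2, t2, _, _, hx2, hy2⟩ := hmem _ h2
    obtain ⟨a3, ha3, t3, _, _, hx3, hy3⟩ := hmem _ h3
    simp only at hx1 hy1 hx2 hy2 hx3 hy3
    have hsum : a1 + a3 = a2 + a2 := by omega
    have haa : a1 = a2 :=
      hA3 (Finset.mem_coe.mpr ha1) (Finset.mem_coe.mpr ha2) (Finset.mem_coe.mpr ha3) hsum
    constructor <;> omega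
  · -- cardinality
    have hcard : Λ.card = rothNumberNat M * M := by
      rw [hΛ_def, Finset.card_image_of_injective _ hinj, Finset.card_product, hAcard,
        Nat.card_Icc]
      congr 1
    have hlogL : 0 < Real.log L := Real.log_pos (by linarith)
    have hsqrtL : 10 ≤ Real.sqrt L := by
      rw [show (10:ℝ) = Real.sqrt 100 by
        rw [show (100:ℝ) = 10^2 by norm_num, Real.sqrt_sq (by norm_num)]]
      exact Real.sqrt_le_sqrt hL100
    have hsqrtL0 : (0:ℝ) < Real.sqrt L := by linarith
    have hlogbd : Real.log L ≤ c * Real.sqrt L := by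
      have := hL₀ L hLL0
      rw [Real.norm_eq_abs, Real.norm_eq_abs, ← Real.sqrt_eq_rpow] at this
      rw [abs_of_pos (Real.log_pos (by linarith)), abs_of_nonneg (Real.sqrt_nonneg _)] at this
      exact this
    have hkey : Real.log 16 < (4 * Real.log 2 + ε) * L / Real.log L - 4 * Real.sqrt L := by
      have h5 : 5 * Real.sqrt L ≤ (4 * Real.log 2 + ε) * L / Real.log L := by
        rw [le_div_iff₀ hlogL]
        have step : 5 * Real.sqrt L * Real.log L ≤ 5 * Real.sqrt L * (c * Real.sqrt L) := by
          apply mul_le_mul_of_nonneg_left hlogbd (by positivity)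
        have hss : Real.sqrt L * Real.sqrt L = L :=
          Real.mul_self_sqrt (by linarith)
        calc 5 * Real.sqrt L * Real.log L ≤ 5 * Real.sqrt L * (c * Real.sqrt L) := step
          _ = 5 * c * (Real.sqrt L * Real.sqrt L) := by ring
          _ = (4 * Real.log 2 + ε) * L := by rw [hss, hc_def]; ring
      have hlog16 : Real.log 16 < 3 := by
        have h24 : (16:ℝ) = 2 ^ 4 := by norm_num
        rw [h24, Real.log_pow]
        have := Real.log_two_lt_d9
        push_cast
        linarith
      linarith
    -- lower bound on the cardinality
    have hMN4 : (N:ℝ) / 4 ≤ (M:ℝ) := by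
      have : N ≤ 4 * M := by omega
      have := (Nat.cast_le (α := ℝ)).mpr this
      push_cast at this
      linarith
    have hM0 : (0:ℝ) < (M:ℝ) := by linarith
    have hMleN : (M:ℝ) ≤ (N:ℝ) := by
      have : M ≤ N := by omega
      exact_mod_cast this
    have hE : Real.exp (-4 * Real.sqrt L) ≤ Real.exp (-4 * Real.sqrt (Real.log M)) := by
      apply Real.exp_le_exp.2
      have : Real.sqrt (Real.log M) ≤ Real.sqrt L :=
        Real.sqrt_le_sqrt (Real.log_le_log hM0 hMleN)
      linarith
    have hroth : (M:ℝ) * Real.exp (-4 * Real.sqrt (Real.log M)) ≤ (rothNumberNat M : ℝ) :=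
      Behrend.roth_lower_bound
    have hE0 : (0:ℝ) < Real.exp (-4 * Real.sqrt L) := Real.exp_pos _
    have hchain : ((N:ℝ)/4 * Real.exp (-4 * Real.sqrt L)) * ((N:ℝ)/4) ≤ (Λ.card : ℝ) := by
      rw [hcard]
      push_cast
      calc ((N:ℝ)/4 * Real.exp (-4 * Real.sqrt L)) * ((N:ℝ)/4)
          ≤ ((M:ℝ) * Real.exp (-4 * Real.sqrt (Real.log M))) * (M:ℝ) := by
            gcongr <;> linarith
        _ ≤ (rothNumberNat M : ℝ) * (M:ℝ) := by
            apply mul_le_mul_of_nonneg_right hroth (le_of_lt hM0)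
    have hNe : (N:ℝ) = Real.exp L := (Real.exp_log hN0).symm
    have hfinal : (N : ℝ) ^ ((2 : ℝ) - (4 * Real.log 2 + ε) / Real.log L) <
        ((N:ℝ)/4 * Real.exp (-4 * Real.sqrt L)) * ((N:ℝ)/4) := by
      have hrw : ((N:ℝ)/4 * Real.exp (-4 * Real.sqrt L)) * ((N:ℝ)/4)
          = Real.exp (2 * L - 4 * Real.sqrt L) / 16 := by
        rw [hNe, show 2 * L - 4 * Real.sqrt L = L + (L + (-4 * Real.sqrt L)) by ring,
          Real.exp_add, Real.exp_add]
        ring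
      rw [hrw, Real.rpow_def_of_pos hN0, lt_div_iff₀ (by norm_num : (0:ℝ) < 16),
        show (16:ℝ) = Real.exp (Real.log 16) by rw [Real.exp_log]; norm_num,
        ← Real.exp_add]
      apply Real.exp_lt_exp.2
      have heq : L * ((4 * Real.log 2 + ε) / Real.log L)
          = (4 * Real.log 2 + ε) * L / Real.log L := by ring
      nlinarith [hkey, heq]
    exact lt_of_lt_of_le hfinal hchain
end

section
/- A set Λ ⊆ [N]³ is called three point free if whenever (x,y,z'), (x,y',z), (x',y,z) ∈ Λ, then x = x', y = y', z = z'. Then for every ε > 0, for all sufficiently large N, there exists a three point free subset of [N]³ with cardinality greater than N^(2 - (4 log 2 + 2ε)/log log N). -/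
open Finset

/-- A set `Λ ⊆ ℕ³` is three point free if `(x,y,z'), (x,y',z), (x',y,z) ∈ Λ`
implies `x = x'`, `y = y'` and `z = z'`. -/
def ThreePointFree (Λ : Finset (ℕ × ℕ × ℕ)) : Prop :=
  ∀ x y z x' y' z', (x, y, z') ∈ Λ → (x, y', z) ∈ Λ → (x', y, z) ∈ Λ →
    x = x' ∧ y = y' ∧ z = z'


lemma expand_digit {q n : ℕ} (u : Fin (n+1) → ℕ) :
    (∑ i, u i * q ^ (i : ℕ)) = u 0 + q * ∑ i : Fin n, u i.succ * q ^ (i : ℕ) := by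
  rw [Fin.sum_univ_succ, Finset.mul_sum]
  simp only [Fin.val_zero, pow_zero, mul_one, Fin.val_succ, pow_succ]
  congr 1
  apply Finset.sum_congr rfl; intro j _; ring

lemma digit_unique {q : ℕ} : ∀ {n : ℕ} (s t : Fin n → ℕ), (∀ i, s i < q) → (∀ i, t i < q) →
    (∑ i, s i * q ^ (i : ℕ)) = (∑ i, t i * q ^ (i : ℕ)) → ∀ i, s i = t i := by
  intro n
  induction n with
  | zero => intro s t _ _ _ i; exact i.elim0
  | succ n ih =>
    intro s t hs ht hsum i
    have hq : 0 < q := lt_of_le_of_lt (Nat.zero_le _) (hs 0)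
    rw [expand_digit s, expand_digit t] at hsum
    have h0 : s 0 = t 0 := by
      have := congrArg (· % q) hsum
      simpa [Nat.add_mul_mod_self_left, Nat.mod_eq_of_lt (hs 0), Nat.mod_eq_of_lt (ht 0)] using this
    have htail : (∑ i : Fin n, s i.succ * q ^ (i : ℕ)) = ∑ i : Fin n, t i.succ * q ^ (i : ℕ) := by
      have h : q * (∑ i : Fin n, s i.succ * q ^ (i : ℕ)) = q * ∑ i : Fin n, t i.succ * q ^ (i : ℕ) := by
        omega
      exact Nat.eq_of_mul_eq_mul_left hq h
    rcases Fin.eq_zero_or_eq_succ i with h | ⟨j, rfl⟩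
    · rw [h]; exact h0
    · exact ih (fun k => s k.succ) (fun k => t k.succ) (fun k => hs _) (fun k => ht _) htail j

lemma digit_sum_lt {q : ℕ} (hq : 0 < q) : ∀ {n : ℕ} (s : Fin n → ℕ), (∀ i, s i < q) →
    (∑ i, s i * q ^ (i : ℕ)) < q ^ n := by
  intro n
  induction n with
  | zero => intro s _; simpa using hq
  | succ n ih =>
    intro s hs
    rw [expand_digit s]
    have h1 := ih (fun k => s k.succ) (fun k => hs _)
    have h2 := hs 0
    have h3 : q ^ (n+1) = q * q ^ n := by ring
    nlinarith [h1, h2]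

variable {n r : ℕ}

def dval (f : Fin n → Fin r) : ℕ := ∑ i, (f i : ℕ) * (2 * r) ^ (i : ℕ)

lemma dval_lt (hr : 0 < r) (f : Fin n → Fin r) : dval f < (2 * r) ^ n :=
  digit_sum_lt (by omega) _ (fun i => lt_of_lt_of_le (f i).isLt (by omega))

lemma dval_digits {f g f' g' : Fin n → Fin r}
    (h : dval f + dval g = dval f' + dval g') :
    ∀ i, (f i : ℕ) + (g i : ℕ) = (f' i : ℕ) + (g' i : ℕ) := by
  have key : (∑ i, ((f i : ℕ) + (g i : ℕ)) * (2 * r) ^ (i : ℕ))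
      = ∑ i, ((f' i : ℕ) + (g' i : ℕ)) * (2 * r) ^ (i : ℕ) := by
    simp only [add_mul, Finset.sum_add_distrib]
    exact h
  exact digit_unique _ _ (fun i => by have := (f i).isLt; have := (g i).isLt; omega)
    (fun i => by have := (f' i).isLt; have := (g' i).isLt; omega) key

lemma dval_inj (f f' : Fin n → Fin r) (h : dval f = dval f') : f = f' := by
  funext i
  have := dval_digits (f := f) (g := f) (f' := f') (g' := f) (by omega) i
  exact Fin.ext (by omega)

lemma construction (n r : ℕ) (hr : 1 ≤ r) :
    ∃ Λ : Finset (ℕ × ℕ × ℕ),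
      (∀ p ∈ Λ, p.1 ∈ Finset.Icc 1 (2 * (2*r)^n) ∧ p.2.1 ∈ Finset.Icc 1 (2 * (2*r)^n) ∧
        p.2.2 ∈ Finset.Icc 1 (2 * (2*r)^n)) ∧
      ThreePointFree Λ ∧
      r ^ (2*n) / (n * (r-1)^2 + 1)^2 ≤ Λ.card := by
  classical
  set M : ℕ := n * (r-1)^2 with hM
  set m : ℕ := r ^ (2*n) / (M + 1)^2 with hm
  set key : ((Fin n → Fin r) × (Fin n → Fin r)) → ℕ × ℕ :=
    fun p => (∑ i, (p.1 i : ℕ) * (p.2 i : ℕ), ∑ i, (p.2 i : ℕ)^2) with hkey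
  have hmaps : ∀ p ∈ (Finset.univ : Finset ((Fin n → Fin r) × (Fin n → Fin r))),
      key p ∈ Finset.Iic M ×ˢ Finset.Iic M := by
    intro p _
    simp only [Finset.mem_product, Finset.mem_Iic]
    constructor
    · calc (∑ i, (p.1 i : ℕ) * (p.2 i : ℕ)) ≤ ∑ _i : Fin n, (r-1)^2 := by
            apply Finset.sum_le_sum
            intro i _
            have h1 := (p.1 i).isLt; have h2 := (p.2 i).isLt
            have : (p.1 i : ℕ) ≤ r - 1 := by omega
            have : (p.2 i : ℕ) ≤ r - 1 := by omega
            calc (p.1 i : ℕ) * (p.2 i : ℕ) ≤ (r-1) * (r-1) := by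
                  apply Nat.mul_le_mul <;> omega
              _ = (r-1)^2 := by ring
        _ = M := by simp [hM]
    · calc (∑ i, (p.2 i : ℕ)^2) ≤ ∑ _i : Fin n, (r-1)^2 := by
            apply Finset.sum_le_sum
            intro i _
            have h2 := (p.2 i).isLt
            have : (p.2 i : ℕ) ≤ r - 1 := by omega
            calc (p.2 i : ℕ)^2 = (p.2 i : ℕ) * (p.2 i : ℕ) := sq _
              _ ≤ (r-1) * (r-1) := by apply Nat.mul_le_mul <;> omega
              _ = (r-1)^2 := by ring
        _ = M := by simp [hM]
  have hcard : ((Finset.Iic M ×ˢ Finset.Iic M).card) * m ≤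
      (Finset.univ : Finset ((Fin n → Fin r) × (Fin n → Fin r))).card := by
    rw [Finset.card_product, Nat.card_Iic, Finset.card_univ]
    have : Fintype.card ((Fin n → Fin r) × (Fin n → Fin r)) = r ^ (2*n) := by
      simp [Fintype.card_fun, two_mul, pow_add]
    rw [this]
    calc (M+1) * (M+1) * m = (M+1)^2 * m := by ring
      _ ≤ r ^ (2*n) := by rw [hm]; exact Nat.mul_div_le _ _
  obtain ⟨⟨c₃, c₂⟩, _, hfib⟩ := Finset.exists_le_card_fiber_of_mul_le_card_of_maps_to hmaps
    (by simp) hcard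
  set A := Finset.filter (fun p => key p = (c₃, c₂)) Finset.univ with hA
  set S : ℕ := 2 * (2*r)^n with hS
  set F : ((Fin n → Fin r) × (Fin n → Fin r)) → ℕ × ℕ × ℕ :=
    fun p => (dval p.1 + 1, dval p.2 + 1, S - dval p.1 - dval p.2) with hF
  have hQ : 1 ≤ (2*r)^n := Nat.one_le_pow _ _ (by omega)
  refine ⟨A.image F, ?_, ?_, ?_⟩
  · intro p hp
    obtain ⟨q, _, rfl⟩ := Finset.mem_image.mp hp
    have h1 := dval_lt hr q.1
    have h2 := dval_lt hr q.2
    simp only [hF, Finset.mem_Icc]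
    refine ⟨⟨by omega, by omega⟩, ⟨by omega, by omega⟩, by omega, by omega⟩
  · intro x y z x' y' z' h1 h2 h3
    obtain ⟨p₁, hp₁, he₁⟩ := Finset.mem_image.mp h1
    obtain ⟨p₂, hp₂, he₂⟩ := Finset.mem_image.mp h2
    obtain ⟨p₃, hp₃, he₃⟩ := Finset.mem_image.mp h3
    simp only [hF, Prod.mk.injEq] at he₁ he₂ he₃
    obtain ⟨ha₁, hb₁, hc₁⟩ := he₁
    obtain ⟨ha₂, hb₂, hc₂⟩ := he₂
    obtain ⟨ha₃, hb₃, hc₃⟩ := he₃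
    have hl₁ := dval_lt hr p₁.1; have hl₂ := dval_lt hr p₁.2
    have hl₃ := dval_lt hr p₂.1; have hl₄ := dval_lt hr p₂.2
    have hl₅ := dval_lt hr p₃.1; have hl₆ := dval_lt hr p₃.2
    have hSQ : S = 2 * (2*r)^n := hS
    have hf12 : p₁.1 = p₂.1 := dval_inj _ _ (by omega)
    have hg13 : p₁.2 = p₃.2 := dval_inj _ _ (by omega)
    set f := p₁.1 with hfd
    set g := p₁.2 with hgd
    set B := p₂.2 with hBd
    set C := p₃.1 with hCd
    have hsum : dval f + dval B = dval C + dval g := by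
      rw [hf12]; rw [hg13]; omega
    have hdig := dval_digits hsum
    -- extract membership constraints
    rw [hA] at hp₁ hp₂ hp₃
    have hk₁ := (Finset.mem_filter.mp hp₁).2
    have hk₂ := (Finset.mem_filter.mp hp₂).2
    have hk₃ := (Finset.mem_filter.mp hp₃).2
    simp only [hkey, Prod.mk.injEq] at hk₁ hk₂ hk₃
    rw [← hf12] at hk₂
    rw [← hg13] at hk₃
    have s1 : (∑ i, (f i : ℕ) * (g i : ℕ)) = c₃ := hk₁.1
    have s2 : (∑ i, (g i : ℕ)^2) = c₂ := hk₁.2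
    have s3 : (∑ i, (f i : ℕ) * (B i : ℕ)) = c₃ := hk₂.1
    have s4 : (∑ i, (B i : ℕ)^2) = c₂ := hk₂.2
    have s5 : (∑ i, (C i : ℕ) * (g i : ℕ)) = c₃ := hk₃.1
    -- integer computation
    set δ : Fin n → ℤ := fun i => (C i : ℤ) - (f i : ℤ) with hδd
    have hδ : ∀ i, (B i : ℤ) = (g i : ℤ) + δ i := by
      intro i
      have := hdig i
      simp only [hδd]
      push_cast
      omega
    have E5 : (∑ i, (C i : ℤ) * (g i : ℤ)) = ∑ i, (f i : ℤ) * (g i : ℤ) := by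
      exact_mod_cast s5.trans s1.symm
    have E24 : (∑ i, (B i : ℤ)^2) = ∑ i, (g i : ℤ)^2 := by
      exact_mod_cast s4.trans s2.symm
    have hδg : (∑ i, δ i * (g i : ℤ)) = 0 := by
      have : (∑ i, δ i * (g i : ℤ)) =
          (∑ i, (C i : ℤ) * (g i : ℤ)) - ∑ i, (f i : ℤ) * (g i : ℤ) := by
        rw [← Finset.sum_sub_distrib]
        apply Finset.sum_congr rfl
        intro i _
        simp only [hδd]; ring
      rw [this, E5, sub_self]
    have hsq : (∑ i, (δ i)^2) = 0 := by
      have expand : (∑ i, (B i : ℤ)^2) =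
          (∑ i, (g i : ℤ)^2) + 2 * (∑ i, δ i * (g i : ℤ)) + ∑ i, (δ i)^2 := by
        rw [Finset.mul_sum, ← Finset.sum_add_distrib, ← Finset.sum_add_distrib]
        apply Finset.sum_congr rfl
        intro i _
        rw [hδ i]; ring
      rw [expand, hδg] at E24
      linarith
    have hδ0 : ∀ i, δ i = 0 := by
      intro i
      have h := (Finset.sum_eq_zero_iff_of_nonneg (fun j _ => sq_nonneg (δ j))).mp hsq i
        (Finset.mem_univ i)
      exact pow_eq_zero_iff two_ne_zero |>.mp h
    have hC : C = f := by
      funext i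
      have := hδ0 i
      simp only [hδd] at this
      have : (C i : ℕ) = (f i : ℕ) := by exact_mod_cast (by omega : ((C i : ℕ) : ℤ) = ((f i : ℕ) : ℤ))
      exact Fin.ext this
    have hB : B = g := by
      funext i
      have h1 := hδ i
      rw [hδ0 i, add_zero] at h1
      exact Fin.ext (by exact_mod_cast h1)
    have eC : dval C = dval f := by rw [hC]
    have eB : dval B = dval g := by rw [hB]
    refine ⟨by omega, by omega, by omega⟩
  · calc m ≤ A.card := hfib
      _ = (A.image F).card := by
          rw [Finset.card_image_of_injOn]
          intro p hp q hq hpq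
          simp only [hF, Prod.mk.injEq] at hpq
          have e1 : dval p.1 = dval q.1 := by omega
          have e2 : dval p.2 = dval q.2 := by omega
          exact Prod.ext (dval_inj _ _ e1) (dval_inj _ _ e2)

set_option maxHeartbeats 1000000 in
theorem three_point_free_large_subsets (ε : ℝ) (hε : 0 < ε) :
    ∃ N₀ : ℕ, ∀ N : ℕ, N₀ ≤ N →
      ∃ Λ : Finset (ℕ × ℕ × ℕ),
        (∀ p ∈ Λ, p.1 ∈ Finset.Icc 1 N ∧ p.2.1 ∈ Finset.Icc 1 N ∧ p.2.2 ∈ Finset.Icc 1 N) ∧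
        ThreePointFree Λ ∧
        (Λ.card : ℝ) >
          (N : ℝ) ^ ((2 : ℝ) - (4 * Real.log 2 + 2 * ε) / Real.log (Real.log N)) := by
  have tlog : Filter.Tendsto (fun N : ℕ => Real.log N) Filter.atTop Filter.atTop :=
    Real.tendsto_log_atTop.comp tendsto_natCast_atTop_atTop
  have tll : Filter.Tendsto (fun N : ℕ => Real.log (Real.log N)) Filter.atTop Filter.atTop :=
    Real.tendsto_log_atTop.comp tlog
  have hsmall : ∀ᶠ N : ℕ in Filter.atTop, 3 * (Real.log (Real.log N))^2 ≤ ε * Real.log N := by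
    have h := (Real.isLittleO_pow_log_id_atTop (n := 2)).bound (by positivity : (0:ℝ) < ε/3)
    filter_upwards [tlog.eventually h, tlog.eventually_ge_atTop 0] with N hN hN0
    simp only [id_eq, Real.norm_eq_abs, sq_abs, abs_pow] at hN
    rw [abs_of_nonneg hN0] at hN
    nlinarith [hN]
  have main : ∀ᶠ N : ℕ in Filter.atTop,
      ∃ Λ : Finset (ℕ × ℕ × ℕ),
        (∀ p ∈ Λ, p.1 ∈ Finset.Icc 1 N ∧ p.2.1 ∈ Finset.Icc 1 N ∧ p.2.2 ∈ Finset.Icc 1 N) ∧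
        ThreePointFree Λ ∧
        (Λ.card : ℝ) >
          (N : ℝ) ^ ((2 : ℝ) - (4 * Real.log 2 + 2 * ε) / Real.log (Real.log N)) := by
    filter_upwards [Filter.eventually_ge_atTop 256, tlog.eventually_ge_atTop 16,
      tll.eventually_ge_atTop 8, tll.eventually_ge_atTop (4 * Real.log 2 + 2 * ε), hsmall]
      with N hN hx16 hL8 hLc hεx
    set c : ℝ := 4 * Real.log 2 + 2 * ε with hcdef
    set x : ℝ := Real.log N with hxdef
    set L : ℝ := Real.log x with hLdef
    clear_value c x L
    have hx0 : (0:ℝ) < x := by linarith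
    have hL0 : (0:ℝ) < L := by linarith
    have hNR : (256:ℝ) ≤ (N:ℝ) := by exact_mod_cast hN
    have hN0' : (0:ℝ) < (N:ℝ) := by linarith
    have hlog2 : (0:ℝ) < Real.log 2 := Real.log_pos (by norm_num)
    -- sqrt bounds
    have hsx : (4:ℝ) ≤ Real.sqrt x := by
      nlinarith [Real.sq_sqrt hx0.le, Real.sqrt_nonneg x]
    set r := ⌊Real.sqrt x⌋₊ with hrdef
    have hr4 : 4 ≤ r := Nat.le_floor (by exact_mod_cast hsx)
    have hrle : (r:ℝ) ≤ Real.sqrt x := Nat.floor_le (Real.sqrt_nonneg x)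
    have hrge2 : Real.sqrt x / 2 ≤ (r:ℝ) := by
      have := Nat.sub_one_lt_floor (Real.sqrt x)
      rw [← hrdef] at this
      linarith
    clear_value r
    have hR0 : (0:ℝ) < (r:ℝ) := by
      have : 0 < r := by omega
      exact_mod_cast this
    -- x ≤ 2 √N, √N ≥ 16
    have hsN : (16:ℝ) ≤ Real.sqrt N := by
      nlinarith [Real.sq_sqrt hN0'.le, Real.sqrt_nonneg (N:ℝ)]
    have hxN : x ≤ 2 * Real.sqrt N := by
      have h := Real.log_le_sub_one_of_pos (show (0:ℝ) < Real.sqrt N by linarith)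
      rw [Real.log_sqrt hN0'.le] at h
      rw [hxdef]; linarith
    -- 2r ≤ N/2 in ℕ
    have hdiv2 : (N:ℝ) ≤ 2 * ((N/2 : ℕ) : ℝ) + 1 := by
      have h : N ≤ 2 * (N/2) + 1 := by omega
      exact_mod_cast h
    have hsqx : Real.sqrt x ≤ x / 4 := by
      nlinarith [Real.sq_sqrt hx0.le]
    have hsNN : Real.sqrt N ≤ (N:ℝ) / 16 := by
      nlinarith [Real.sq_sqrt hN0'.le]
    have h2rN : 2 * r ≤ N / 2 := by
      have h1 : (2*(r:ℝ)) ≤ (N:ℝ)/16 := by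
        calc (2*(r:ℝ)) ≤ 2 * Real.sqrt x := by linarith
          _ ≤ x / 2 := by linarith
          _ ≤ Real.sqrt N := by linarith
          _ ≤ (N:ℝ)/16 := hsNN
      have h2 : ((2*r : ℕ) : ℝ) ≤ ((N/2 : ℕ) : ℝ) := by push_cast; linarith
      exact_mod_cast h2
    set n := Nat.log (2*r) (N/2) with hndef
    have hb : 1 < 2*r := by omega
    have hn1 : 1 ≤ n := Nat.log_pos hb h2rN
    have hpowle : (2*r)^n ≤ N/2 := Nat.pow_log_le_self _ (by omega)
    have hpowgt : N/2 < (2*r)^(n+1) := Nat.lt_pow_succ_log_self hb _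
    clear_value n
    obtain ⟨Λ, hrange, htpf, hcard⟩ := construction n r (by omega)
    refine ⟨Λ, ?_, htpf, ?_⟩
    · intro p hp
      obtain ⟨h1, h2, h3⟩ := hrange p hp
      have hSN : 2*(2*r)^n ≤ N := by omega
      simp only [Finset.mem_Icc] at h1 h2 h3 ⊢
      exact ⟨⟨h1.1, by omega⟩, ⟨h2.1, by omega⟩, h3.1, by omega⟩
    · -- cardinality bound
      clear tlog tll hsmall htpf hrange hsx hsN hxN hsqx hsNN h2rN hb
      have hnn1 : (1:ℝ) ≤ (n:ℝ) := by exact_mod_cast hn1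
      set K := (n * (r-1)^2 + 1)^2 with hKdef
      set m := r ^ (2*n) / K with hmdef
      have hK0 : 0 < K := by rw [hKdef]; positivity
      clear_value K m
      -- step 1-3 : (r:ℝ)^(2n) ≥ N²/(64 r² 4ⁿ)
      have hcast1 : ((N/2:ℕ):ℝ) < (2*(r:ℝ))^(n+1) := by
        have h : ((N/2 : ℕ):ℝ) < (((2*r)^(n+1) : ℕ):ℝ) := by exact_mod_cast hpowgt
        push_cast at h
        convert h using 2
      have hN4 : (N:ℝ)/4 ≤ ((N/2:ℕ):ℝ) := by linarith
      have hQ : (N:ℝ)/4 < (2*(r:ℝ))^(n+1) := lt_of_le_of_lt hN4 hcast1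
      have h2R0 : (0:ℝ) < 2*(r:ℝ) := by linarith
      have hQn : (N:ℝ)/(8*(r:ℝ)) ≤ (2*(r:ℝ))^n := by
        have hP0 : (0:ℝ) < (2*(r:ℝ))^n := pow_pos h2R0 n
        rw [pow_succ] at hQ
        rw [div_le_iff₀ (by positivity)]
        linarith only [hQ]
      have hPP : (r:ℝ)^(2*n) * 4^n = ((2*(r:ℝ))^n)^2 := by
        calc (r:ℝ)^(2*n) * 4^n = ((r:ℝ)^2)^n * 4^n := by rw [pow_mul]
          _ = ((r:ℝ)^2*4)^n := (mul_pow _ _ _).symm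
          _ = ((2*(r:ℝ))^2)^n := by ring_nf
          _ = ((2*(r:ℝ))^n)^2 := by rw [← pow_mul, ← pow_mul, mul_comm 2 n]
      have hpow2 : (N:ℝ)^2 / (64 * (r:ℝ)^2 * 4^n) ≤ (r:ℝ)^(2*n) := by
        have hsq : ((N:ℝ)/(8*(r:ℝ)))^2 ≤ ((2*(r:ℝ))^n)^2 :=
          pow_le_pow_left₀ (by positivity) hQn 2
        rw [← hPP] at hsq
        rw [div_le_iff₀ (by positivity)]
        have heq : ((N:ℝ)/(8*(r:ℝ)))^2 = (N:ℝ)^2/(64*(r:ℝ)^2) := by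
          field_simp; ring
        rw [heq] at hsq
        calc (N:ℝ)^2 = ((N:ℝ)^2/(64*(r:ℝ)^2)) * (64*(r:ℝ)^2) := by field_simp
          _ ≤ ((r:ℝ)^(2*n) * 4^n) * (64*(r:ℝ)^2) := by
              apply mul_le_mul_of_nonneg_right hsq (by positivity)
          _ = (r:ℝ)^(2*n) * (64 * (r:ℝ)^2 * 4^n) := by ring
      -- K bound
      have hKle : (K:ℝ) ≤ 4*(n:ℝ)^2*(r:ℝ)^4 := by
        have h1 : n * (r-1)^2 + 1 ≤ 2*n*r^2 := by
          have ha : (r-1)^2 ≤ r^2 := Nat.pow_le_pow_left (by omega) 2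
          have h2 : 1 ≤ n * r^2 := by
            have hb2 : 1 ≤ r^2 := Nat.one_le_pow _ _ (by omega)
            calc 1 = 1*1 := rfl
              _ ≤ n * r^2 := Nat.mul_le_mul hn1 hb2
          have hd : 2*n*r^2 = n*r^2 + n*r^2 := by ring
          calc n * (r-1)^2 + 1 ≤ n * r^2 + 1 :=
                Nat.add_le_add_right (Nat.mul_le_mul (Nat.le_refl n) ha) 1
            _ ≤ 2*n*r^2 := by omega
        have h2 : K ≤ (2*n*r^2)^2 := by rw [hKdef]; exact Nat.pow_le_pow_left h1 2
        have h4 : (K:ℝ) ≤ (((2*n*r^2)^2 : ℕ) : ℝ) := by exact_mod_cast h2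
        calc (K:ℝ) ≤ (((2*n*r^2)^2 : ℕ) : ℝ) := h4
          _ = 4*(n:ℝ)^2*(r:ℝ)^4 := by push_cast; ring
      -- B bounds
      set B := (N:ℝ) ^ ((2:ℝ) - c / L) with hBdef
      clear_value B
      have hE1 : (1:ℝ) ≤ 2 - c/L := by
        have : c/L ≤ 1 := (div_le_one hL0).mpr hLc
        linarith
      have hone : (1:ℝ) ≤ (N:ℝ) := by linarith
      have hB1 : (1:ℝ) ≤ B := by
        rw [hBdef]
        calc (1:ℝ) = (N:ℝ)^(0:ℝ) := (Real.rpow_zero _).symm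
          _ ≤ (N:ℝ) ^ ((2:ℝ) - c / L) := Real.rpow_le_rpow_of_exponent_le hone (by linarith)
      have hBpos : (0:ℝ) < B := by linarith
      -- n L ≤ 2x
      have hnL : (n:ℝ) * L ≤ 2 * x := by
        have hcastp : (((2*r)^n : ℕ) : ℝ) ≤ (N:ℝ) := by
          have h : (2*r)^n ≤ N := hpowle.trans (Nat.div_le_self _ _)
          exact_mod_cast h
        have hcastp2 : (2*(r:ℝ))^n ≤ (N:ℝ) := by push_cast at hcastp; linarith [hcastp]
        have hlog : (n:ℝ) * Real.log (2*(r:ℝ)) ≤ x := by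
          have h := Real.log_le_log (by positivity : (0:ℝ) < (2*(r:ℝ))^n) hcastp2
          rw [Real.log_pow] at h
          rw [hxdef]
          exact h
        have hlog2R : L/2 ≤ Real.log (2*(r:ℝ)) := by
          have h1 : Real.log (Real.sqrt x / 2) ≤ Real.log (r:ℝ) :=
            Real.log_le_log (by positivity) hrge2
          rw [Real.log_div (by positivity) (by norm_num), Real.log_sqrt hx0.le] at h1
          have h2 : Real.log (2*(r:ℝ)) = Real.log 2 + Real.log (r:ℝ) :=
            Real.log_mul (by norm_num) (by positivity)
          rw [h2]
          rw [hLdef]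
          linarith
        have hmul : (n:ℝ)*(L/2) ≤ (n:ℝ)*Real.log (2*(r:ℝ)) :=
          mul_le_mul_of_nonneg_left hlog2R (by positivity)
        linarith only [hmul, hlog]
      -- r⁶ ≤ x³
      have hR6 : (r:ℝ)^6 ≤ x^3 := by
        have h1 : (r:ℝ)^6 ≤ (Real.sqrt x)^6 := pow_le_pow_left₀ hR0.le hrle 6
        have h2 : (Real.sqrt x)^6 = x^3 := by
          rw [show (6:ℕ) = 2*3 by rfl, pow_mul, Real.sq_sqrt hx0.le]
        linarith
      -- 4^n ≤ exp(4 log2 x / L)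
      have h4n : (4:ℝ)^n ≤ Real.exp (4 * Real.log 2 * x / L) := by
        have h1 : (4:ℝ)^n = Real.exp ((n:ℝ) * Real.log 4) := by
          rw [Real.exp_nat_mul, Real.exp_log (by norm_num : (0:ℝ) < 4)]
        have h2 : Real.log 4 = 2 * Real.log 2 := by
          rw [show (4:ℝ) = 2^2 by norm_num, Real.log_pow]; push_cast; ring
        rw [h1, h2]
        apply Real.exp_le_exp.mpr
        have hdl : (n:ℝ) ≤ 2 * x / L := by
          rw [le_div_iff₀ hL0]; linarith
        rw [div_eq_mul_inv]
        have hLinv : (0:ℝ) < L⁻¹ := by positivity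
        have : (n:ℝ) * (2 * Real.log 2) ≤ (2 * x * L⁻¹) * (2 * Real.log 2) := by
          apply mul_le_mul_of_nonneg_right _ (by positivity)
          rw [div_eq_mul_inv] at hdl; exact hdl
        calc (n:ℝ) * (2 * Real.log 2) ≤ (2 * x * L⁻¹) * (2 * Real.log 2) := this
          _ = 4 * Real.log 2 * x * L⁻¹ := by ring
      -- x = exp L, 2048 ≤ exp L
      have hxL : x = Real.exp L := by rw [hLdef]; exact (Real.exp_log hx0).symm
      have h2048 : (2048:ℝ) ≤ Real.exp L := by
        have h1 : Real.log 2048 = 11 * Real.log 2 := by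
          rw [show (2048:ℝ) = 2^11 by norm_num, Real.log_pow]; push_cast; ring
        have h2 : Real.log 2048 ≤ L := by
          rw [h1]; nlinarith [Real.log_two_lt_d9]
        calc (2048:ℝ) = Real.exp (Real.log 2048) := (Real.exp_log (by norm_num)).symm
          _ ≤ Real.exp L := Real.exp_le_exp.mpr h2
      have hexpmain : 512*(n:ℝ)^2*(r:ℝ)^6*(4:ℝ)^n ≤ (N:ℝ)^(c/L) := by
        have hL1 : (1:ℝ) ≤ L^2 := by
          have h := mul_le_mul hL8 hL8 (by norm_num) (by linarith only [hL8])
          linarith only [h]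
        have step1 : 512*(n:ℝ)^2*(r:ℝ)^6 ≤ 2048 * x^5 / L^2 := by
          have h1 : (n:ℝ)^2 ≤ 4*x^2/L^2 := by
            rw [le_div_iff₀ (by positivity)]
            have hsq0 : (0:ℝ) ≤ (n:ℝ)*L := by positivity
            have h1' : ((n:ℝ)*L)*((n:ℝ)*L) ≤ (2*x)*(2*x) :=
              mul_le_mul hnL hnL hsq0 (by linarith)
            linarith only [h1']
          calc 512*(n:ℝ)^2*(r:ℝ)^6 ≤ 512*(4*x^2/L^2)*x^3 := by
                apply mul_le_mul
                · exact mul_le_mul_of_nonneg_left h1 (by norm_num)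
                · exact hR6
                · positivity
                · positivity
            _ = 2048 * x^5 / L^2 := by ring
        have step2 : 2048 * x^5 / L^2 ≤ 2048 * x^5 := by
          rw [div_le_iff₀ (by positivity)]
          linarith only [mul_le_mul_of_nonneg_left hL1 (show (0:ℝ) ≤ 2048*x^5 by positivity)]
        have step3 : (2048:ℝ) * x^5 ≤ Real.exp (6*L) := by
          have h1 : x^5 = Real.exp (5*L) := by
            rw [hxL, ← Real.exp_nat_mul]; norm_num
          calc (2048:ℝ) * x^5 ≤ Real.exp L * x^5 :=
                mul_le_mul_of_nonneg_right h2048 (by positivity)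
            _ = Real.exp L * Real.exp (5*L) := by rw [h1]
            _ = Real.exp (6*L) := by rw [← Real.exp_add]; ring_nf
        have step4 : Real.exp (6*L) * Real.exp (4*Real.log 2 * x / L) ≤ (N:ℝ)^(c/L) := by
          rw [← Real.exp_add, Real.rpow_def_of_pos hN0', ← hxdef]
          apply Real.exp_le_exp.mpr
          have hgoal : 6*L ≤ 2*ε*x/L := by
            rw [le_div_iff₀ hL0]; linarith only [hεx]
          have heq2 : x * (c/L) = 4*Real.log 2*x/L + 2*ε*x/L := by
            rw [hcdef]; field_simp
          rw [heq2]
          linarith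
        calc 512*(n:ℝ)^2*(r:ℝ)^6*(4:ℝ)^n ≤ (2048 * x^5) * (4:ℝ)^n :=
              mul_le_mul_of_nonneg_right (step1.trans step2) (by positivity)
          _ ≤ Real.exp (6*L) * Real.exp (4*Real.log 2 * x / L) :=
              mul_le_mul step3 h4n (by positivity) (by positivity)
          _ ≤ (N:ℝ)^(c/L) := step4
      -- combine: K (B+1) ≤ r^(2n)
      have hfinal : (K:ℝ) * (B+1) ≤ (r:ℝ)^(2*n) := by
        have hN2 : ((N:ℝ))^(2:ℝ) = (N:ℝ)^2 := by
          rw [show ((2:ℝ)) = ((2:ℕ):ℝ) by norm_num, Real.rpow_natCast]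
        have hBN : B * (N:ℝ)^(c/L) = (N:ℝ)^2 := by
          rw [hBdef, ← Real.rpow_add hN0', ← hN2]
          congr 1
          ring
        have h512 : 512*(n:ℝ)^2*(r:ℝ)^6*(4:ℝ)^n * B ≤ (N:ℝ)^2 := by
          calc 512*(n:ℝ)^2*(r:ℝ)^6*(4:ℝ)^n * B ≤ (N:ℝ)^(c/L) * B :=
                mul_le_mul_of_nonneg_right hexpmain hBpos.le
            _ = (N:ℝ)^2 := by rw [mul_comm]; exact hBN
        have hKB : (K:ℝ) * (B+1) ≤ 8*(n:ℝ)^2*(r:ℝ)^4*B := by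
          have h1 : B + 1 ≤ 2*B := by linarith
          calc (K:ℝ) * (B+1) ≤ (4*(n:ℝ)^2*(r:ℝ)^4) * (2*B) := by
                apply mul_le_mul hKle h1 (by linarith) (by positivity)
            _ = 8*(n:ℝ)^2*(r:ℝ)^4*B := by ring
        have h8B : 8*(n:ℝ)^2*(r:ℝ)^4*B ≤ (N:ℝ)^2 / (64 * (r:ℝ)^2 * 4^n) := by
          rw [le_div_iff₀ (by positivity)]
          calc 8*(n:ℝ)^2*(r:ℝ)^4*B * (64 * (r:ℝ)^2 * 4^n)
              = 512*(n:ℝ)^2*(r:ℝ)^6*(4:ℝ)^n * B := by ring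
            _ ≤ (N:ℝ)^2 := h512
        linarith [hpow2]
      -- Nat division: r^(2n) < K(m+1)
      have hmlt : r^(2*n) < K * (m+1) := by
        have h1 := Nat.div_add_mod (r^(2*n)) K
        have h2 := Nat.mod_lt (r^(2*n)) hK0
        have h3 : K*(r^(2*n)/K + 1) = K*(r^(2*n)/K) + K := by ring
        rw [hmdef]
        omega
      have hmltR : ((r:ℝ))^(2*n) < (K:ℝ) * ((m:ℝ)+1) := by
        have h : ((r^(2*n) : ℕ):ℝ) < ((K * (m+1) : ℕ):ℝ) := by exact_mod_cast hmlt
        push_cast at h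
        linarith [h]
      have hBm : B < (m:ℝ) := by
        have h1 : (K:ℝ) * (B+1) < (K:ℝ) * ((m:ℝ)+1) := lt_of_le_of_lt hfinal hmltR
        have hK0' : (0:ℝ) < (K:ℝ) := by exact_mod_cast hK0
        have := (mul_lt_mul_iff_right₀ hK0').mp h1
        linarith
      have hcardR : (m:ℝ) ≤ (Λ.card : ℝ) := by exact_mod_cast hcard
      calc B < (m:ℝ) := hBm
        _ ≤ (Λ.card:ℝ) := hcardR
  obtain ⟨N₀, hN₀⟩ := Filter.eventually_atTop.mp main
  exact ⟨N₀, hN₀⟩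
end

section
/- Let d, n be positive integers with d² dividing n, and let Λ ⊆ ℕ² be the set of pairs (x,y) such that in base 2d-1 all digits of x and y lie in {0,...,d-1} and each digit pair (i,j) ∈ {0,...,d-1}² occurs exactly n/d² times among positions 0,...,n-1. Then Λ is corner-free: if (x,y), (x',y), (x,y') ∈ Λ and x - y = x' - y', then x = x' and y = y'. -/
/-- The `k`-th digit of `x` in base `b`. -/
def digit (b x k : ℕ) : ℕ := x / b ^ k % b

/-- Membership in the Behrend-type set: `x, y < (2d-1)^n`, all base-`(2d-1)` digits lie in
`{0,…,d-1}`, and each digit pair `(i,j) ∈ {0,…,d-1}²` occurs exactly `n/d²` times among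
positions `0,…,n-1`. -/
def InBehrendSet (d n x y : ℕ) : Prop :=
  x < (2 * d - 1) ^ n ∧ y < (2 * d - 1) ^ n ∧
  (∀ k, digit (2 * d - 1) x k < d ∧ digit (2 * d - 1) y k < d) ∧
  ∀ i < d, ∀ j < d,
    ((Finset.range n).filter
        (fun k => digit (2 * d - 1) x k = i ∧ digit (2 * d - 1) y k = j)).card = n / d ^ 2

lemma add_div_pow (B a b : ℕ) (h : ∀ k, digit B a k + digit B b k < B) (k : ℕ) :
    (a + b) / B ^ k = a / B ^ k + b / B ^ k := by
  induction k with
  | zero => simp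
  | succ k ih =>
    have hB : 0 < B := lt_of_le_of_lt (Nat.zero_le _) (h 0)
    have ha := Nat.div_add_mod (a / B ^ k) B
    have hb := Nat.div_add_mod (b / B ^ k) B
    have hk := h k
    simp only [digit] at hk
    have h1 : a / B ^ k + b / B ^ k
        = (a / B ^ k % B + b / B ^ k % B) + B * (a / B ^ k / B + b / B ^ k / B) := by
      rw [Nat.mul_add]; omega
    have h2 : (a / B ^ k + b / B ^ k) / B = a / B ^ k / B + b / B ^ k / B := by
      rw [h1, Nat.add_mul_div_left _ _ hB, Nat.div_eq_of_lt hk, Nat.zero_add]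
    rw [pow_succ, ← Nat.div_div_eq_div_mul, ← Nat.div_div_eq_div_mul,
      ← Nat.div_div_eq_div_mul, ih, h2]

lemma digit_add (B a b : ℕ) (h : ∀ k, digit B a k + digit B b k < B) (k : ℕ) :
    digit B (a + b) k = digit B a k + digit B b k := by
  have hk := h k
  simp only [digit] at hk ⊢
  rw [add_div_pow B a b h k]
  have ha := Nat.div_add_mod (a / B ^ k) B
  have hb := Nat.div_add_mod (b / B ^ k) B
  have h1 : a / B ^ k + b / B ^ k
      = (a / B ^ k % B + b / B ^ k % B) + B * (a / B ^ k / B + b / B ^ k / B) := by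
    rw [Nat.mul_add]; omega
  rw [h1, Nat.add_mul_mod_self_left, Nat.mod_eq_of_lt hk]

lemma eq_of_digit_eq (B : ℕ) : ∀ n a a', a < B ^ n → a' < B ^ n →
    (∀ k < n, digit B a k = digit B a' k) → a = a' := by
  intro n
  induction n with
  | zero => intro a a' ha ha' _; simp at ha ha'; omega
  | succ n ih =>
    intro a a' ha ha' hdig
    have hB : 0 < B := by
      rcases Nat.eq_zero_or_pos B with h | h
      · subst h; simp at ha
      · exact h
    have h0 := hdig 0 (Nat.succ_pos n)
    simp only [digit, pow_zero, Nat.div_one] at h0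
    have hq : a / B = a' / B := by
      apply ih
      · rw [Nat.div_lt_iff_lt_mul hB, ← pow_succ]; exact ha
      · rw [Nat.div_lt_iff_lt_mul hB, ← pow_succ]; exact ha'
      · intro k hk
        have hd := hdig (k + 1) (by omega)
        simp only [digit] at hd ⊢
        rw [Nat.div_div_eq_div_mul, Nat.div_div_eq_div_mul, ← pow_succ'] at *
        exact hd
    have h1 := Nat.div_add_mod a B
    have h2 := Nat.div_add_mod a' B
    rw [hq, h0] at h1
    omega

lemma sum_digit_pairs (d n B m : ℕ) (a b : ℕ)
    (hdig : ∀ k, digit B a k < d ∧ digit B b k < d)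
    (hcount : ∀ i < d, ∀ j < d,
      ((Finset.range n).filter
        (fun k => digit B a k = i ∧ digit B b k = j)).card = m)
    (f : ℕ → ℕ → ℤ) :
    ∑ k ∈ Finset.range n, f (digit B a k) (digit B b k)
      = ∑ i ∈ Finset.range d, ∑ j ∈ Finset.range d, (m : ℤ) * f i j := by
  classical
  rw [← Finset.sum_fiberwise_of_maps_to
    (g := fun k => (digit B a k, digit B b k)) (t := Finset.range d ×ˢ Finset.range d)
    (fun k _ => by
      simp only [Finset.mem_product, Finset.mem_range]
      exact ⟨(hdig k).1, (hdig k).2⟩)]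
  rw [Finset.sum_product]
  refine Finset.sum_congr rfl fun i hi => Finset.sum_congr rfl fun j hj => ?_
  have hc : ∀ k ∈ (Finset.range n).filter
      (fun k => (digit B a k, digit B b k) = (i, j)),
      f (digit B a k) (digit B b k) = f i j := by
    intro k hk
    simp only [Finset.mem_filter, Prod.mk.injEq] at hk
    rw [hk.2.1, hk.2.2]
  rw [Finset.sum_congr rfl hc, Finset.sum_const, nsmul_eq_mul]
  congr 1
  have he : ((Finset.range n).filter (fun k => (digit B a k, digit B b k) = (i, j)))
      = (Finset.range n).filter (fun k => digit B a k = i ∧ digit B b k = j) := by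
    apply Finset.filter_congr; intro k _; simp [Prod.ext_iff]
  rw [he, hcount i (Finset.mem_range.mp hi) j (Finset.mem_range.mp hj)]

theorem behrend_type_set_corner_free (d n : ℕ) (hd : 0 < d) (hn : 0 < n)
    (hdvd : d ^ 2 ∣ n) (x y x' y' : ℕ)
    (h1 : InBehrendSet d n x y) (h2 : InBehrendSet d n x' y) (h3 : InBehrendSet d n x y')
    (hdiff : (x : ℤ) - (y : ℤ) = (x' : ℤ) - (y' : ℤ)) :
    x = x' ∧ y = y' := by
  obtain ⟨hx, hy, hdigxy, hcnt1⟩ := h1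
  obtain ⟨hx', hy2, hdigx'y, hcnt2⟩ := h2
  obtain ⟨hx2, hy', hdigxy', hcnt3⟩ := h3
  set B := 2 * d - 1 with hB
  have hxy : x + y' = x' + y := by omega
  have hcarry1 : ∀ k, digit B x k + digit B y' k < B := by
    intro k
    have h1 := (hdigxy k).1
    have h2 := (hdigxy' k).2
    omega
  have hcarry2 : ∀ k, digit B x' k + digit B y k < B := by
    intro k
    have h1 := (hdigx'y k).1
    have h2 := (hdigx'y k).2
    omega
  have hkey : ∀ k, digit B x k + digit B y' k = digit B x' k + digit B y k := by
    intro k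
    rw [← digit_add B x y' hcarry1 k, ← digit_add B x' y hcarry2 k, hxy]
  have S1 := sum_digit_pairs d n B (n / d ^ 2) x y hdigxy hcnt1
    (fun i j => (i : ℤ) * j)
  have S2 := sum_digit_pairs d n B (n / d ^ 2) x y' hdigxy' hcnt3
    (fun i j => (i : ℤ) * j)
  have Q1 := sum_digit_pairs d n B (n / d ^ 2) x y hdigxy hcnt1
    (fun i j => (i : ℤ) * i)
  have Q2 := sum_digit_pairs d n B (n / d ^ 2) x' y hdigx'y hcnt2
    (fun i j => (i : ℤ) * i)
  beta_reduce at S1 S2 Q1 Q2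
  have hzero : ∑ k ∈ Finset.range n,
      ((digit B x' k : ℤ) - digit B x k) ^ 2 = 0 := by
    have hexp : ∀ k ∈ Finset.range n,
        ((digit B x' k : ℤ) - digit B x k) ^ 2
        = (digit B x' k : ℤ) * digit B x' k - (digit B x k : ℤ) * digit B x k
          - 2 * ((digit B x k : ℤ) * digit B y' k)
          + 2 * ((digit B x k : ℤ) * digit B y k) := by
      intro k _
      have h := hkey k
      have h' : (digit B x k : ℤ) + digit B y' k
          = (digit B x' k : ℤ) + digit B y k := by exact_mod_cast h
      linear_combination 2 * (digit B x k : ℤ) * h'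
    rw [Finset.sum_congr rfl hexp, Finset.sum_add_distrib, Finset.sum_sub_distrib,
      Finset.sum_sub_distrib, ← Finset.mul_sum, ← Finset.mul_sum, S1, S2, Q1, Q2]
    ring
  have hz := (Finset.sum_eq_zero_iff_of_nonneg
    (fun k _ => sq_nonneg ((digit B x' k : ℤ) - digit B x k))).1 hzero
  have hdx : ∀ k < n, digit B x k = digit B x' k := by
    intro k hk
    have h := hz k (Finset.mem_range.mpr hk)
    have h0 : (digit B x' k : ℤ) - digit B x k = 0 := by
      exact pow_eq_zero_iff two_ne_zero |>.mp h
    have : (digit B x' k : ℤ) = digit B x k := by linarith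
    exact_mod_cast this.symm
  have hdy : ∀ k < n, digit B y k = digit B y' k := by
    intro k hk
    have h := hkey k
    have h2 := hdx k hk
    omega
  exact ⟨eq_of_digit_eq B n x x' hx hx' hdx, eq_of_digit_eq B n y y' hy hy' hdy⟩
end
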